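/- Let R be a commutative ring with a fixed permutable weak regular sequence s_1,...,s_k, and let a_1,...,a_n ∈ R be monomials in the s_i. Then the syzygy module {(c_1,...,c_n) ∈ R^n : c_1 a_1 + ... + c_n a_n = 0} is generated as an R-module by the elements (lcm(a_i,a_j)/a_i)·e_i − (lcm(a_i,a_j)/a_j)·e_j for 1 ≤ i < j ≤ n, where e_i denotes the i-th standard basis vector. -/

import Mathlib

/-- The `s`-monomial with exponent vector `α`: `∏ j, s j ^ α j`. -/
def sMon {R : Type*} [CommRing R] {k : ℕ} (s : Fin k → R) (α : Fin k → ℕ) : R :=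
  ∏ j, s j ^ α j

/-- `s` is a weak regular sequence: each `s i` is a nonzerodivisor modulo the ideal
generated by the preceding terms. -/
def IsWeakRegSeq {R : Type*} [CommRing R] {k : ℕ} (s : Fin k → R) : Prop :=
  ∀ i : Fin k, ∀ t : R,
    t * s i ∈ Ideal.span (s '' {j | j < i}) → t ∈ Ideal.span (s '' {j | j < i})

/-- `s` is a permutable weak regular sequence: every permutation of it is a weak
regular sequence. -/
def IsPermWeakRegSeq {R : Type*} [CommRing R] {k : ℕ} (s : Fin k → R) : Prop :=
  ∀ σ : Equiv.Perm (Fin k), IsWeakRegSeq (s ∘ σ)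


/-!
By induction on `n`, syzygies of `a_1, …, a_n` are controlled by the colon ideal
`(a_1, …, a_{n-1}) : a_n`, which is generated by the monomials `lcm(a_i, a_n) / a_n`; subtracting
the matching combination of the Koszul relations `(i, n)` kills the last coordinate.

Dividing out one variable at a time, this colon ideal is computed from the fact that `s p` is a
nonzerodivisor modulo every monomial ideal whose generators do not involve `s p`. That fact is
proved by induction on the total degree of the generators, passing to `R ⧸ (s q)` for a variable
`s q` dividing some generator; permutability is what makes the images of the other `s i` again a
permutable weak regular sequence.
-/

open Function

section

variable {R : Type*} [CommRing R] {k : ℕ}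

section Monomials

lemma sMon_zero (s : Fin k → R) : sMon s 0 = 1 := by
  simp [sMon]

lemma sMon_add (s : Fin k → R) (α γ : Fin k → ℕ) : sMon s (α + γ) = sMon s α * sMon s γ := by
  simp [sMon, pow_add, Finset.prod_mul_distrib]

lemma sMon_single (s : Fin k → R) (q : Fin k) : sMon s (Pi.single q 1) = s q := by
  rw [sMon, Finset.prod_eq_single q] <;> simp +contextual

lemma single_le_of_ne_zero {α : Fin k → ℕ} {q : Fin k} (h : α q ≠ 0) : Pi.single q 1 ≤ α := by
  intro t
  rcases eq_or_ne t q with rfl | ht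
  · simpa using Nat.one_le_iff_ne_zero.mpr h
  · simp [ht]

lemma sub_single_of_eq_zero {α : Fin k → ℕ} {q : Fin k} (h : α q = 0) : α - Pi.single q 1 = α := by
  ext t
  rcases eq_or_ne t q with rfl | ht
  · simp [h]
  · simp [ht]

lemma sub_single_sup_sub_sub_single {α γ : Fin k → ℕ} {q : Fin k} (h : γ q ≠ 0) :
    (α - Pi.single q 1) ⊔ (γ - Pi.single q 1) - (γ - Pi.single q 1) = α ⊔ γ - γ := by
  ext t
  rcases eq_or_ne t q with rfl | ht
  · simp only [Pi.sub_apply, Pi.sup_apply, Pi.single_eq_same]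
    omega
  · simp [ht]

lemma sMon_eq_mul_of_ne_zero (s : Fin k → R) {α : Fin k → ℕ} {q : Fin k} (h : α q ≠ 0) :
    sMon s α = sMon s (α - Pi.single q 1) * s q := by
  rw [← sMon_single s q, ← sMon_add, tsub_add_cancel_of_le (single_le_of_ne_zero h)]

lemma map_sMon {S : Type*} [CommRing S] (f : R →+* S) (s : Fin k → R) (α : Fin k → ℕ) :
    f (sMon s α) = sMon (f ∘ s) α := by
  simp [sMon]

lemma sMon_eq_of_eq_zero {m : ℕ} (s : Fin (m + 1) → R) {α : Fin (m + 1) → ℕ} {q : Fin (m + 1)}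
    (h : α q = 0) : sMon s α = sMon (s ∘ q.succAbove) (α ∘ q.succAbove) := by
  simp [sMon, Fin.prod_univ_succAbove _ q, h]

lemma sum_sub_single_lt {α : Fin k → ℕ} {q : Fin k} (h : α q ≠ 0) :
    ∑ t, (α - Pi.single q 1 : Fin k → ℕ) t < ∑ t, α t :=
  Finset.sum_lt_sum (fun t _ => tsub_le_self)
    ⟨q, Finset.mem_univ q, by simpa using Nat.pos_of_ne_zero h⟩

end Monomials

lemma Fintype.sum_subtype_lt_sum {ι : Type*} [Fintype ι] {P : ι → Prop} [DecidablePred P]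
    {f : ι → ℕ} {j₀ : ι} (hj₀ : ¬ P j₀) (h : 0 < f j₀) : ∑ j : {j // P j}, f j < ∑ j, f j := by
  rw [← Finset.sum_subtype (Finset.univ.filter P) (by simp)]
  exact Finset.sum_lt_sum_of_subset (Finset.filter_subset _ _) (Finset.mem_univ j₀)
    (by simpa using hj₀) h (fun _ _ _ => Nat.zero_le _)

section WeakRegular

lemma mem_map_mk_span_singleton_iff {a y : R} {I : Ideal R} :
    Ideal.Quotient.mk (Ideal.span {a}) y ∈ I.map (Ideal.Quotient.mk (Ideal.span {a})) ↔
      y ∈ I ⊔ Ideal.span {a} := by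
  rw [← Ideal.mem_comap, Ideal.comap_map_of_surjective' _ Ideal.Quotient.mk_surjective,
    Ideal.mk_ker]

lemma Fin.image_cons_setOf_lt_succ {α : Type*} {m : ℕ} (a : α) (f : Fin m → α) (i : Fin m) :
    (Fin.cons a f : Fin (m + 1) → α) '' {j | j < i.succ} = insert a (f '' {j | j < i}) := by
  have : {j : Fin (m + 1) | j < i.succ} = insert 0 (Fin.succ '' {j | j < i}) := by
    ext j
    cases j using Fin.cases <;> simp [Fin.succ_pos]
  rw [this, Set.image_insert_eq, Set.image_image]
  simp

lemma IsWeakRegSeq.quotient_of_cons {m : ℕ} {a : R} {f : Fin m → R}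
    (h : IsWeakRegSeq (Fin.cons a f : Fin (m + 1) → R)) :
    IsWeakRegSeq (Ideal.Quotient.mk (Ideal.span {a}) ∘ f) := by
  intro i t ht
  obtain ⟨t, rfl⟩ := Ideal.Quotient.mk_surjective t
  rw [Set.image_comp, ← Ideal.map_span, mem_map_mk_span_singleton_iff]
  rw [Set.image_comp, ← Ideal.map_span, comp_apply, ← map_mul,
    mem_map_mk_span_singleton_iff] at ht
  have := h i.succ t
  rw [Fin.cons_succ, Fin.image_cons_setOf_lt_succ, Ideal.span_insert, sup_comm] at this
  exact this ht

lemma IsPermWeakRegSeq.quotient {m : ℕ} {s : Fin (m + 1) → R} (hs : IsPermWeakRegSeq s)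
    (q : Fin (m + 1)) :
    IsPermWeakRegSeq (Ideal.Quotient.mk (Ideal.span {s q}) ∘ s ∘ q.succAbove) := by
  intro τ
  have hinj : Injective (Fin.cons q (q.succAbove ∘ τ) : Fin (m + 1) → Fin (m + 1)) :=
    Fin.cons_injective_iff.mpr
      ⟨fun ⟨i, hi⟩ => Fin.succAbove_ne q (τ i) hi, Fin.succAbove_right_injective.comp τ.injective⟩
  have := hs (Equiv.ofBijective _ (Finite.injective_iff_bijective.mp hinj))
  rw [Equiv.coe_ofBijective, Fin.comp_cons] at this
  exact this.quotient_of_cons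

lemma IsPermWeakRegSeq.eq_zero_of_mul_eq_zero {s : Fin k → R} (hs : IsPermWeakRegSeq s)
    (p : Fin k) {u : R} (hu : u * s p = 0) : u = 0 := by
  obtain ⟨m, rfl⟩ : ∃ m, k = m + 1 := Nat.exists_eq_add_one.mpr p.pos
  simpa [Fin.not_lt_zero, hu] using hs (Equiv.swap 0 p) 0 u

end WeakRegular

section MonomialIdeal

def sMonIdeal (s : Fin k → R) {ι : Type*} (β : ι → Fin k → ℕ) : Ideal R :=
  Ideal.span (Set.range fun j => sMon s (β j))

variable {ι : Type*}

lemma sMon_mem_sMonIdeal (s : Fin k → R) (β : ι → Fin k → ℕ) (j : ι) :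
    sMon s (β j) ∈ sMonIdeal s β :=
  Ideal.subset_span ⟨j, rfl⟩

lemma sMonIdeal_le_iff {s : Fin k → R} {β : ι → Fin k → ℕ} {I : Ideal R} :
    sMonIdeal s β ≤ I ↔ ∀ j, sMon s (β j) ∈ I := by
  simp [sMonIdeal, Ideal.span_le, Set.range_subset_iff]

lemma mem_sMonIdeal_iff [Fintype ι] {s : Fin k → R} {β : ι → Fin k → ℕ} {u : R} :
    u ∈ sMonIdeal s β ↔ ∃ c : ι → R, ∑ j, c j * sMon s (β j) = u :=
  Submodule.mem_span_range_iff_exists_fun R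

lemma map_sMonIdeal {S : Type*} [CommRing S] (f : R →+* S) (s : Fin k → R)
    (β : ι → Fin k → ℕ) : (sMonIdeal s β).map f = sMonIdeal (f ∘ s) β := by
  simp only [sMonIdeal, Ideal.map_span, ← Set.range_comp, comp_def, map_sMon]

lemma sMonIdeal_eq_of_eq_zero {m : ℕ} (s : Fin (m + 1) → R) {β : ι → Fin (m + 1) → ℕ}
    {q : Fin (m + 1)} (h : ∀ j, β j q = 0) :
    sMonIdeal s β = sMonIdeal (s ∘ q.succAbove) (fun j => β j ∘ q.succAbove) := by
  simp only [sMonIdeal, sMon_eq_of_eq_zero s (h _)]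

lemma sMonIdeal_subtype_le_sub_single (s : Fin k → R) (β : ι → Fin k → ℕ) (q : Fin k) :
    sMonIdeal s (fun j : {j // β j q = 0} => β j) ≤ sMonIdeal s (fun j => β j - Pi.single q 1) :=
  sMonIdeal_le_iff.mpr fun j => by
    have := sMon_mem_sMonIdeal s (fun j => β j - Pi.single q 1) j
    rwa [sub_single_of_eq_zero j.2] at this

lemma sMonIdeal_eq_sup (s : Fin k → R) (β : ι → Fin k → ℕ) (q : Fin k) :
    sMonIdeal s β = sMonIdeal s (fun j : {j // β j q = 0} => β j) ⊔
      Ideal.span {s q} * sMonIdeal s (fun j => β j - Pi.single q 1) := by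
  refine le_antisymm (sMonIdeal_le_iff.mpr fun j => ?_) (sup_le ?_ ?_)
  · by_cases hj : β j q = 0
    · exact Ideal.mem_sup_left (sMon_mem_sMonIdeal s (fun j : {j // β j q = 0} => β j) ⟨j, hj⟩)
    · rw [sMon_eq_mul_of_ne_zero s hj, mul_comm (sMon s _)]
      exact Ideal.mem_sup_right (Ideal.mul_mem_mul (Ideal.mem_span_singleton_self _)
        (sMon_mem_sMonIdeal s (fun j => β j - Pi.single q 1) j))
  · exact sMonIdeal_le_iff.mpr fun j => sMon_mem_sMonIdeal s β j.1
  · rw [sMonIdeal, Ideal.span_mul_span', Set.singleton_mul, Ideal.span_le, ← Set.range_comp,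
      Set.range_subset_iff]
    intro j
    by_cases hj : β j q = 0
    · simp only [comp_apply, sub_single_of_eq_zero hj]
      exact Ideal.mul_mem_left _ _ (sMon_mem_sMonIdeal s β j)
    · simp only [comp_apply]
      rw [mul_comm, ← sMon_eq_mul_of_ne_zero s hj]
      exact sMon_mem_sMonIdeal s β j

lemma mem_sMonIdeal_sub_single_of_mul_mem {s : Fin k → R} {β : ι → Fin k → ℕ} {q : Fin k}
    (hreg : ∀ v, v * s q ∈ sMonIdeal s (fun j : {j // β j q = 0} => β j) →
      v ∈ sMonIdeal s (fun j : {j // β j q = 0} => β j))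
    {u : R} (hu : u * s q ∈ sMonIdeal s β) : u ∈ sMonIdeal s (fun j => β j - Pi.single q 1) := by
  rw [sMonIdeal_eq_sup s β q] at hu
  obtain ⟨x, hx, _, hsz, e⟩ := Submodule.mem_sup.mp hu
  obtain ⟨z, hz, rfl⟩ := Ideal.mem_span_singleton_mul.mp hsz
  have hxz : (u - z) * s q ∈ sMonIdeal s (fun j : {j // β j q = 0} => β j) := by
    rwa [show (u - z) * s q = x by linear_combination -e]
  simpa using add_mem (sMonIdeal_subtype_le_sub_single s β q (hreg _ hxz)) hz

end MonomialIdeal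

section Colon

variable {ι : Type*} [Fintype ι]

lemma sum_sum_subtype_lt_sum_sum (β : ι → Fin k → ℕ) {q : Fin k} {j₀ : ι} (hq : β j₀ q ≠ 0) :
    ∑ j : {j // β j q = 0}, ∑ t, β j t < ∑ j, ∑ t, β j t :=
  Fintype.sum_subtype_lt_sum (f := fun j => ∑ t, β j t) hq
    (Finset.sum_pos' (fun _ _ => Nat.zero_le _) ⟨q, Finset.mem_univ q, Nat.pos_of_ne_zero hq⟩)

lemma sum_sum_sub_single_lt_sum_sum (β : ι → Fin k → ℕ) {q : Fin k} {j₀ : ι}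
    (hq : β j₀ q ≠ 0) : ∑ j, ∑ t, (β j - Pi.single q 1 : Fin k → ℕ) t < ∑ j, ∑ t, β j t :=
  Finset.sum_lt_sum (fun _ _ => Finset.sum_le_sum fun _ _ => tsub_le_self)
    ⟨j₀, Finset.mem_univ j₀, sum_sub_single_lt hq⟩

theorem IsPermWeakRegSeq.mem_sMonIdeal_of_mul_mem {s : Fin k → R} (hs : IsPermWeakRegSeq s)
    {β : ι → Fin k → ℕ} {p : Fin k} (hp : ∀ j, β j p = 0) {u : R}
    (hu : u * s p ∈ sMonIdeal s β) : u ∈ sMonIdeal s β := by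
  induction hμ : ∑ j, ∑ t, β j t using Nat.strong_induction_on generalizing R k ι with
  | _ μ IH =>
  by_cases hone : ∃ j, β j = 0
  · obtain ⟨j, hj⟩ := hone
    have := sMon_mem_sMonIdeal s β j
    rw [hj, sMon_zero, ← Ideal.eq_top_iff_one] at this
    simp [this]
  push Not at hone
  cases isEmpty_or_nonempty ι
  · rw [sMonIdeal, Set.range_eq_empty, Ideal.span_empty, Ideal.mem_bot] at hu ⊢
    exact hs.eq_zero_of_mul_eq_zero p hu
  obtain ⟨j₀⟩ : Nonempty ι := inferInstance
  obtain ⟨q, hq⟩ : ∃ q, β j₀ q ≠ 0 := Function.ne_iff.mp (hone j₀)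
  have hqp : q ≠ p := fun h => hq (h ▸ hp j₀)
  obtain ⟨m, rfl⟩ : ∃ m, k = m + 1 := Nat.exists_eq_add_one.mpr q.pos
  obtain ⟨p', hp'⟩ := Fin.exists_succAbove_eq hqp.symm
  set β₀ : {j // β j q = 0} → Fin (m + 1) → ℕ := fun j => β j
  have hβ₀ : ∀ j : {j // β j q = 0}, β j q = 0 := fun j => j.2
  have hsplit := sMonIdeal_eq_sup s β q
  have hdeg₀ := hμ ▸ sum_sum_subtype_lt_sum_sum β hq
  -- Modulo `s q` the generators divisible by `s q` vanish and the others have smaller degree.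
  have hu₀ : u ∈ sMonIdeal s β₀ ⊔ Ideal.span {s q} := by
    rw [← mem_map_mk_span_singleton_iff, sMonIdeal_eq_of_eq_zero s hβ₀, map_sMonIdeal]
    refine IH _ ?_ (hs.quotient q) (β := fun j => β₀ j ∘ q.succAbove) (p := p')
      (fun j => by simp [β₀, hp', hp]) ?_ rfl
    · simpa [Fin.sum_univ_succAbove _ q, hβ₀] using hdeg₀
    · rw [← map_sMonIdeal, ← sMonIdeal_eq_of_eq_zero s hβ₀, comp_apply, comp_apply, hp',
        ← map_mul, mem_map_mk_span_singleton_iff]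
      exact (hsplit ▸ sup_le_sup_left Ideal.mul_le_left _ : sMonIdeal s β ≤ _) hu
  obtain ⟨x, hx, _, hw, rfl⟩ := Submodule.mem_sup.mp hu₀
  obtain ⟨w, rfl⟩ := Ideal.mem_span_singleton'.mp hw
  have hwpq : w * s p * s q ∈ sMonIdeal s β := by
    rw [show w * s p * s q = (x + w * s q) * s p - x * s p by ring]
    exact sub_mem hu (Ideal.mul_mem_right _ _ (hsplit ▸ Ideal.mem_sup_left hx))
  have hwp := mem_sMonIdeal_sub_single_of_mul_mem
    (fun v hv => IH _ hdeg₀ hs (fun j => j.2) hv rfl) hwpq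
  have hw := IH _ (hμ ▸ sum_sum_sub_single_lt_sum_sum β hq) hs
    (fun j => by simp [hp j]) hwp rfl
  rw [hsplit, mul_comm w]
  exact add_mem (Ideal.mem_sup_left hx)
    (Ideal.mem_sup_right (Ideal.mul_mem_mul (Ideal.mem_span_singleton_self _) hw))

theorem IsPermWeakRegSeq.mem_sMonIdeal_sub_single_of_mul_mem {s : Fin k → R}
    (hs : IsPermWeakRegSeq s) {β : ι → Fin k → ℕ} {p : Fin k} {u : R}
    (hu : u * s p ∈ sMonIdeal s β) : u ∈ sMonIdeal s (fun j => β j - Pi.single p 1) :=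
  _root_.mem_sMonIdeal_sub_single_of_mul_mem
    (fun _ hv => hs.mem_sMonIdeal_of_mul_mem (fun j => j.2) hv) hu

theorem IsPermWeakRegSeq.mem_sMonIdeal_sup_sub_of_mul_mem {s : Fin k → R}
    (hs : IsPermWeakRegSeq s) {β : ι → Fin k → ℕ} {γ : Fin k → ℕ} {u : R}
    (hu : u * sMon s γ ∈ sMonIdeal s β) : u ∈ sMonIdeal s (fun j => β j ⊔ γ - γ) := by
  induction hν : ∑ t, γ t using Nat.strong_induction_on generalizing β γ u with
  | _ ν IH =>
  by_cases hγ : γ = 0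
  · subst hγ
    simpa [sMon_zero] using hu
  obtain ⟨p, hp⟩ : ∃ p, γ p ≠ 0 := Function.ne_iff.mp hγ
  rw [sMon_eq_mul_of_ne_zero s hp, ← mul_assoc] at hu
  have := IH _ (hν ▸ sum_sub_single_lt hp) (hs.mem_sMonIdeal_sub_single_of_mul_mem hu) rfl
  simpa only [sub_single_sup_sub_sub_single hp] using this

end Colon

section Koszul

variable {n : ℕ}

def koszulSyzygy (s : Fin k → R) (β : Fin n → Fin k → ℕ) (i j : Fin n) : Fin n → R :=
  Pi.single i (sMon s (β i ⊔ β j - β i)) - Pi.single j (sMon s (β i ⊔ β j - β j))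

def koszulSpan (s : Fin k → R) (β : Fin n → Fin k → ℕ) : Submodule R (Fin n → R) :=
  Submodule.span R {v | ∃ i j, i < j ∧ v = koszulSyzygy s β i j}

lemma koszulSyzygy_dotProduct (s : Fin k → R) (β : Fin n → Fin k → ℕ) (i j : Fin n) :
    koszulSyzygy s β i j ⬝ᵥ (fun t => sMon s (β t)) = 0 := by
  rw [koszulSyzygy, sub_dotProduct, single_dotProduct, single_dotProduct, ← sMon_add,
    ← sMon_add, tsub_add_cancel_of_le le_sup_left, tsub_add_cancel_of_le le_sup_right, sub_self]

lemma Function.ExtendByZero.linearMap_single {ι η : Type*} [DecidableEq ι] [DecidableEq η]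
    {e : ι → η} (he : Injective e) (i : ι) (x : R) :
    ExtendByZero.linearMap R e (Pi.single i x) = Pi.single (e i) x := by
  ext b
  rw [ExtendByZero.linearMap_apply]
  by_cases hb : ∃ a, e a = b
  · obtain ⟨a, rfl⟩ := hb
    simp [he.extend_apply, Pi.single_apply, he.eq_iff]
  · rw [extend_apply' _ _ _ hb, Pi.single_eq_of_ne (fun h => hb ⟨i, h.symm⟩), Pi.zero_apply]

lemma koszulSpan_comp_le {m : ℕ} (s : Fin k → R) (β : Fin n → Fin k → ℕ) {e : Fin m → Fin n}
    (he : StrictMono e) :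
    (koszulSpan s (β ∘ e)).map (ExtendByZero.linearMap R e) ≤ koszulSpan s β := by
  rw [koszulSpan, Submodule.map_span_le]
  rintro _ ⟨i, j, hij, rfl⟩
  refine Submodule.subset_span ⟨e i, e j, he hij, ?_⟩
  simp only [koszulSyzygy, map_sub, ExtendByZero.linearMap_single he.injective, comp_apply]

lemma mem_koszulSpan_of_last_eq_zero (s : Fin k → R) (β : Fin (n + 1) → Fin k → ℕ)
    {c : Fin (n + 1) → R} (hlast : c (Fin.last n) = 0)
    (hc : c ∘ Fin.castSucc ∈ koszulSpan s (β ∘ Fin.castSucc)) : c ∈ koszulSpan s β := by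
  have hext : ExtendByZero.linearMap R Fin.castSucc (c ∘ Fin.castSucc) = c := by
    ext i
    cases i using Fin.lastCases with
    | last => simp [extend_apply', hlast]
    | cast i => simp [(Fin.castSucc_injective n).extend_apply]
  exact hext ▸ koszulSpan_comp_le s β Fin.strictMono_castSucc (Submodule.mem_map_of_mem hc)

end Koszul

end

/-- The syzygy module of `s`-monomials `a_i = s^{β i}` is generated by the Koszul-type
relations `(lcm(a_i,a_j)/a_i)·e_i − (lcm(a_i,a_j)/a_j)·e_j` for `i < j`. -/
theorem stmt2 {R : Type*} [CommRing R] {k n : ℕ} (s : Fin k → R)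
    (hs : IsPermWeakRegSeq s) (β : Fin n → Fin k → ℕ)
    (c : Fin n → R) (hc : ∑ i, c i * sMon s (β i) = 0) :
    c ∈ Submodule.span R
      {v : Fin n → R | ∃ i j : Fin n, i < j ∧
        v = Pi.single i (sMon s fun t => max (β i t) (β j t) - β i t)
          - Pi.single j (sMon s fun t => max (β i t) (β j t) - β j t)} := by
  change c ∈ koszulSpan s β
  induction n with
  | zero => exact Subsingleton.elim c 0 ▸ zero_mem _
  | succ n ih =>
    have hlast : c (Fin.last n) * sMon s (β (Fin.last n)) ∈ sMonIdeal s (β ∘ Fin.castSucc) := by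
      rw [Fin.sum_univ_castSucc] at hc
      rw [eq_neg_of_add_eq_zero_right hc]
      exact neg_mem (mem_sMonIdeal_iff.mpr ⟨_, rfl⟩)
    obtain ⟨r, hr⟩ := mem_sMonIdeal_iff.mp (hs.mem_sMonIdeal_sup_sub_of_mul_mem hlast)
    set c' := c + ∑ i, r i • koszulSyzygy s β i.castSucc (Fin.last n)
    have hc'syz : c' ⬝ᵥ (fun t => sMon s (β t)) = 0 := by
      simp only [c', add_dotProduct, sum_dotProduct, smul_dotProduct, koszulSyzygy_dotProduct,
        smul_zero, Finset.sum_const_zero, add_zero]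
      exact hc
    have hc'last : c' (Fin.last n) = 0 := by
      simpa [c', koszulSyzygy, Finset.sum_apply, ← sub_eq_add_neg, sub_eq_zero] using hr.symm
    have hc'mem : c' ∈ koszulSpan s β := by
      refine mem_koszulSpan_of_last_eq_zero s β hc'last (ih _ _ ?_)
      rw [dotProduct, Fin.sum_univ_castSucc, hc'last, zero_mul, add_zero] at hc'syz
      exact hc'syz
    have hc : c = c' - ∑ i, r i • koszulSyzygy s β i.castSucc (Fin.last n) := by simp [c']
    rw [hc]
    exact sub_mem hc'mem (sum_mem fun i _ => Submodule.smul_mem _ _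
      (Submodule.subset_span ⟨_, _, Fin.castSucc_lt_last i, rfl⟩))
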